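/- Initial-condition independence of limsup-boundedness for the deterministic Riccati recursion: for any deterministic binary sequence z and any two positive semidefinite initial matrices Σ₁ and Σ₂, limsup_{k→∞} Tr(P_k^{Σ₁}) < ∞ if and only if limsup_{k→∞} Tr(P_k^{Σ₂}) < ∞. (Equivalently: if limsup_{k→∞} Tr(P_k) = ∞ for some positive semidefinite initial condition then it equals ∞ for all, and if limsup_{k→∞} Tr(P_k) < ∞ for some positive semidefinite initial condition then it is finite for all.) -/

import Mathlib

/-!
Both Riccati steps are monotone and subhomogeneous (`step (c • X) ≤ c • step X` for `c ≥ 1`):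
with `φ_K(X) = (A - K C) X (A - K C)ᵀ + Q + K R Kᵀ`, which is affine in `X` with a positive
semidefinite constant term, `h = φ_0` and `g = min_K φ_K`, the minimum being attained at the
Kalman gain. By controllability `Pₙ^T` is positive definite for every `T ⪰ 0`, so
`Pₙ^S ≤ c Pₙ^T` for some `c ≥ 1`, and monotonicity and subhomogeneity propagate this bound to
all `k ≥ n`. Hence the traces of the two trajectories bound each other up to a constant.
-/

open Filter Matrix

noncomputable section

/-- The operator `h(X) = A X Aᵀ + Q`. -/
def hOp {n : ℕ} (A Q : Matrix (Fin n) (Fin n) ℝ) (X : Matrix (Fin n) (Fin n) ℝ) :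
    Matrix (Fin n) (Fin n) ℝ :=
  A * X * Aᵀ + Q

/-- The operator `g(X) = A X Aᵀ + Q − A X Cᵀ (C X Cᵀ + R)⁻¹ C X Aᵀ`. -/
def gOp {n m : ℕ} (A Q : Matrix (Fin n) (Fin n) ℝ) (C : Matrix (Fin m) (Fin n) ℝ)
    (R : Matrix (Fin m) (Fin m) ℝ) (X : Matrix (Fin n) (Fin n) ℝ) :
    Matrix (Fin n) (Fin n) ℝ :=
  A * X * Aᵀ + Q - A * X * Cᵀ * (C * X * Cᵀ + R)⁻¹ * (C * X * Aᵀ)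

/-- The stacked observability matrix `[C; CA; …; CA^(k−1)]`. -/
def obsMat {n m : ℕ} (C : Matrix (Fin m) (Fin n) ℝ) (A : Matrix (Fin n) (Fin n) ℝ) (k : ℕ) :
    Matrix (Fin k × Fin m) (Fin n) ℝ :=
  fun p j => (C * A ^ (p.1 : ℕ)) p.2 j

/-- The controllability matrix `[S, AS, …, A^(n−1) S]`. -/
def ctrbMat {n : ℕ} (A : Matrix (Fin n) (Fin n) ℝ) (S : Matrix (Fin n) (Fin n) ℝ) :
    Matrix (Fin n) (Fin n × Fin n) ℝ :=
  fun i p => (A ^ (p.1 : ℕ) * S) i p.2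

/-- The deterministic covariance recursion driven by the binary sequence `z`:
`P 0 = S`, `P (k+1) = g (P k)` if `z k` holds, `P (k+1) = h (P k)` otherwise. -/
def detFilt {n m : ℕ} (A Q : Matrix (Fin n) (Fin n) ℝ) (C : Matrix (Fin m) (Fin n) ℝ)
    (R : Matrix (Fin m) (Fin m) ℝ) (z : ℕ → Bool) (S : Matrix (Fin n) (Fin n) ℝ) :
    ℕ → Matrix (Fin n) (Fin n) ℝ
  | 0 => S
  | k + 1 =>
      if z k then gOp A Q C R (detFilt A Q C R z S k)
      else hOp A Q (detFilt A Q C R z S k)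


open scoped MatrixOrder

namespace Matrix

variable {ι κ : Type*} [Fintype ι] [Fintype κ]

lemma PosSemidef.mul_mul_transpose_same {X : Matrix κ κ ℝ} (hX : X.PosSemidef)
    (B : Matrix ι κ ℝ) : (B * X * Bᵀ).PosSemidef := by
  simpa [conjTranspose_eq_transpose_of_trivial] using hX.mul_mul_conjTranspose_same B

lemma mul_mul_transpose_le_mul_mul_transpose {X Y : Matrix κ κ ℝ} (h : X ≤ Y)
    (B : Matrix ι κ ℝ) : B * X * Bᵀ ≤ B * Y * Bᵀ := by
  rw [le_iff] at h ⊢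
  simpa [Matrix.mul_sub, Matrix.sub_mul] using h.mul_mul_transpose_same B

lemma dotProduct_mul_mul_transpose_mulVec (x : ι → ℝ) (B : Matrix ι κ ℝ) (X : Matrix κ κ ℝ) :
    x ⬝ᵥ (B * X * Bᵀ) *ᵥ x = (Bᵀ *ᵥ x) ⬝ᵥ X *ᵥ (Bᵀ *ᵥ x) := by
  rw [← mulVec_mulVec, ← mulVec_mulVec, dotProduct_mulVec x B, mulVec_transpose]

lemma trace_le_trace_of_le {X Y : Matrix ι ι ℝ} (h : X ≤ Y) : X.trace ≤ Y.trace :=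
  OrderHomClass.mono (tracePositiveLinearMap ι ℝ ℝ) h

lemma posDef_mul_transpose_of_rank_eq {B : Matrix ι κ ℝ} (h : B.rank = Fintype.card ι) :
    (B * Bᵀ).PosDef := by
  have hrows : LinearIndependent ℝ B.row :=
    linearIndependent_iff_card_eq_finrank_span.mpr (by rw [← h, rank_eq_finrank_span_row]; rfl)
  simpa [conjTranspose_eq_transpose_of_trivial] using
    PosDef.mul_conjTranspose_self B (vecMul_injective_iff.mpr hrows)

lemma eventually_le_smul_of_posDef [DecidableEq ι] {S T : Matrix ι ι ℝ} (hS : S.IsHermitian)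
    (hT : T.PosDef) : ∀ᶠ c : ℝ in atTop, S ≤ c • T := by
  rcases subsingleton_or_nontrivial (Matrix ι ι ℝ) with _ | _
  · exact Eventually.of_forall fun c => (Subsingleton.elim S (c • T)).le
  obtain ⟨r, hr, hrT⟩ := (CFC.exists_pos_algebraMap_le_iff (a := T)).mpr fun x hx => by
    obtain ⟨i, rfl⟩ := hT.1.spectrum_real_eq_range_eigenvalues ▸ hx
    exact hT.eigenvalues_pos i
  obtain ⟨s, hs⟩ := (finite_real_spectrum (A := S)).bddAbove
  have hSs : S ≤ s • 1 := by
    simpa [Algebra.algebraMap_eq_smul_one] using le_algebraMap_of_spectrum_le (fun x hx => hs hx) hS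
  have hrT' : r • 1 ≤ T := by simpa [Algebra.algebraMap_eq_smul_one] using hrT
  filter_upwards [eventually_ge_atTop (s / r), eventually_ge_atTop 0] with c hc hc0
  calc S ≤ s • 1 := hSs
    _ ≤ (c * r) • 1 := by
      rw [le_iff, ← sub_smul]
      exact PosSemidef.one.smul (sub_nonneg.mpr ((div_le_iff₀ hr).mp hc))
    _ = c • r • (1 : Matrix ι ι ℝ) := mul_smul c r 1
    _ ≤ c • T := smul_le_smul_of_nonneg_left hrT' hc0

lemma PosSemidef.cfcSqrt_eq [DecidableEq ι] {Q : Matrix ι ι ℝ} (hQ : Q.PosSemidef) :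
    CFC.sqrt Q = (hQ.1.eigenvectorUnitary : Matrix ι ι ℝ) *
      diagonal ((RCLike.ofReal : ℝ → ℝ) ∘ Real.sqrt ∘ hQ.1.eigenvalues) *
      star (hQ.1.eigenvectorUnitary : Matrix ι ι ℝ) := by
  rw [CFC.sqrt_eq_real_sqrt Q hQ.nonneg, cfcₙ_eq_cfc, hQ.1.cfc_eq]
  rfl

lemma PosSemidef.cfcSqrt_mul_transpose_self [DecidableEq ι] {Q : Matrix ι ι ℝ}
    (hQ : Q.PosSemidef) : CFC.sqrt Q * (CFC.sqrt Q)ᵀ = Q := by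
  rw [← conjTranspose_eq_transpose_of_trivial, (CFC.sqrt_nonneg Q).posSemidef.1.eq,
    CFC.sqrt_mul_sqrt_self Q hQ.nonneg]

end Matrix

lemma EReal.limsup_coe_lt_top_iff {α : Type*} {l : Filter α} {u : α → ℝ} :
    l.limsup (fun a => (u a : EReal)) < ⊤ ↔ l.IsBoundedUnder (· ≤ ·) u := by
  constructor
  · intro h
    obtain ⟨b, hb, -⟩ := EReal.lt_iff_exists_real_btwn.mp h
    exact ⟨b, eventually_map.mpr
      ((eventually_lt_of_limsup_lt hb).mono fun a ha => EReal.coe_le_coe_iff.mp ha.le)⟩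
  · rintro ⟨b, hb⟩
    refine (limsup_le_of_le (by isBoundedDefault) ?_).trans_lt (EReal.coe_lt_top b)
    filter_upwards [eventually_map.mp hb] with a ha
    exact EReal.coe_le_coe_iff.mpr ha

section Riccati

variable {n m : ℕ} {A Q : Matrix (Fin n) (Fin n) ℝ} {C : Matrix (Fin m) (Fin n) ℝ}
  {R : Matrix (Fin m) (Fin m) ℝ} {z : ℕ → Bool} {S T : Matrix (Fin n) (Fin n) ℝ}

def kalmanGain (A : Matrix (Fin n) (Fin n) ℝ) (C : Matrix (Fin m) (Fin n) ℝ)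
    (R : Matrix (Fin m) (Fin m) ℝ) (X : Matrix (Fin n) (Fin n) ℝ) : Matrix (Fin n) (Fin m) ℝ :=
  A * X * Cᵀ * (C * X * Cᵀ + R)⁻¹

def gainOp (A Q : Matrix (Fin n) (Fin n) ℝ) (C : Matrix (Fin m) (Fin n) ℝ)
    (R : Matrix (Fin m) (Fin m) ℝ) (K : Matrix (Fin n) (Fin m) ℝ) (X : Matrix (Fin n) (Fin n) ℝ) :
    Matrix (Fin n) (Fin n) ℝ :=
  (A - K * C) * X * (A - K * C)ᵀ + Q + K * R * Kᵀ

lemma gainOp_eq_gOp_add (hR : R.PosDef) {X : Matrix (Fin n) (Fin n) ℝ} (hX : X.PosSemidef)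
    (K : Matrix (Fin n) (Fin m) ℝ) :
    gainOp A Q C R K X = gOp A Q C R X
      + (K - kalmanGain A C R X) * (C * X * Cᵀ + R) * (K - kalmanGain A C R X)ᵀ := by
  have hM : (C * X * Cᵀ + R).PosDef := PosDef.posSemidef_add (hX.mul_mul_transpose_same C) hR
  have hMt : (C * X * Cᵀ + R)ᵀ = C * X * Cᵀ + R := by
    rw [← conjTranspose_eq_transpose_of_trivial]; exact hM.1
  have hXt : Xᵀ = X := by rw [← conjTranspose_eq_transpose_of_trivial]; exact hX.1
  have hdet : IsUnit (C * X * Cᵀ + R).det := hM.isUnit.map detMonoidHom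
  simp only [gainOp, gOp, kalmanGain]
  set M := C * X * Cᵀ + R
  have hMinv : ∀ Y : Matrix (Fin m) (Fin n) ℝ, M * (M⁻¹ * Y) = Y := fun Y => by
    rw [← Matrix.mul_assoc, mul_nonsing_inv M hdet, Matrix.one_mul]
  have hinvM : ∀ Y : Matrix (Fin m) (Fin n) ℝ, M⁻¹ * (M * Y) = Y := fun Y => by
    rw [← Matrix.mul_assoc, nonsing_inv_mul M hdet, Matrix.one_mul]
  simp only [transpose_sub, transpose_mul, transpose_transpose, hXt, transpose_nonsing_inv, hMt]
  simp only [Matrix.sub_mul, Matrix.mul_sub, Matrix.mul_assoc, hMinv, hinvM]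
  simp only [M, Matrix.add_mul, Matrix.mul_add, Matrix.mul_assoc]
  abel

lemma gOp_eq_gainOp (hR : R.PosDef) {X : Matrix (Fin n) (Fin n) ℝ} (hX : X.PosSemidef) :
    gOp A Q C R X = gainOp A Q C R (kalmanGain A C R X) X := by
  simp [gainOp_eq_gOp_add hR hX]

lemma gOp_le_gainOp (hR : R.PosDef) {X : Matrix (Fin n) (Fin n) ℝ} (hX : X.PosSemidef)
    (K : Matrix (Fin n) (Fin m) ℝ) : gOp A Q C R X ≤ gainOp A Q C R K X := by
  rw [gainOp_eq_gOp_add hR hX K, le_add_iff_nonneg_right, nonneg_iff_posSemidef]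
  exact ((hX.mul_mul_transpose_same C).add hR.posSemidef).mul_mul_transpose_same _

lemma gainOp_posSemidef (hQ : Q.PosSemidef) (hR : R.PosSemidef) (K : Matrix (Fin n) (Fin m) ℝ)
    {X : Matrix (Fin n) (Fin n) ℝ} (hX : X.PosSemidef) : (gainOp A Q C R K X).PosSemidef :=
  ((hX.mul_mul_transpose_same _).add hQ).add (hR.mul_mul_transpose_same K)

lemma gainOp_mono (K : Matrix (Fin n) (Fin m) ℝ) {X Y : Matrix (Fin n) (Fin n) ℝ} (h : X ≤ Y) :
    gainOp A Q C R K X ≤ gainOp A Q C R K Y := by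
  simp only [gainOp, add_le_add_iff_right]
  exact mul_mul_transpose_le_mul_mul_transpose h _

lemma gainOp_smul_le (hQ : Q.PosSemidef) (hR : R.PosSemidef) (K : Matrix (Fin n) (Fin m) ℝ)
    (X : Matrix (Fin n) (Fin n) ℝ) {c : ℝ} (hc : 1 ≤ c) :
    gainOp A Q C R K (c • X) ≤ c • gainOp A Q C R K X := by
  have hnoise : (Q + K * R * Kᵀ).PosSemidef := hQ.add (hR.mul_mul_transpose_same K)
  have hdiff : c • gainOp A Q C R K X - gainOp A Q C R K (c • X) = (c - 1) • (Q + K * R * Kᵀ) := by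
    simp only [gainOp, Matrix.mul_smul, Matrix.smul_mul, smul_add, sub_smul, one_smul]
    abel
  rw [le_iff, hdiff]
  exact hnoise.smul (sub_nonneg.mpr hc)

lemma gOp_mono (hR : R.PosDef) {X Y : Matrix (Fin n) (Fin n) ℝ} (hX : X.PosSemidef) (h : X ≤ Y) :
    gOp A Q C R X ≤ gOp A Q C R Y := by
  have hY : Y.PosSemidef := by simpa using hX.add h
  calc gOp A Q C R X ≤ gainOp A Q C R (kalmanGain A C R Y) X := gOp_le_gainOp hR hX _
    _ ≤ gainOp A Q C R (kalmanGain A C R Y) Y := gainOp_mono _ h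
    _ = gOp A Q C R Y := (gOp_eq_gainOp hR hY).symm

lemma gOp_smul_le (hQ : Q.PosSemidef) (hR : R.PosDef) {X : Matrix (Fin n) (Fin n) ℝ}
    (hX : X.PosSemidef) {c : ℝ} (hc : 1 ≤ c) : gOp A Q C R (c • X) ≤ c • gOp A Q C R X := by
  calc gOp A Q C R (c • X) ≤ gainOp A Q C R (kalmanGain A C R X) (c • X) :=
        gOp_le_gainOp hR (hX.smul (by linarith)) _
    _ ≤ c • gainOp A Q C R (kalmanGain A C R X) X := gainOp_smul_le hQ hR.posSemidef _ _ hc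
    _ = c • gOp A Q C R X := by rw [← gOp_eq_gainOp hR hX]

def riccatiStep (A Q : Matrix (Fin n) (Fin n) ℝ) (C : Matrix (Fin m) (Fin n) ℝ)
    (R : Matrix (Fin m) (Fin m) ℝ) (b : Bool) (X : Matrix (Fin n) (Fin n) ℝ) :
    Matrix (Fin n) (Fin n) ℝ :=
  if b then gOp A Q C R X else hOp A Q X

lemma riccatiStep_false (X : Matrix (Fin n) (Fin n) ℝ) :
    riccatiStep A Q C R false X = gainOp A Q C R 0 X := by
  simp [riccatiStep, hOp, gainOp]

lemma detFilt_succ (k : ℕ) :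
    detFilt A Q C R z T (k + 1) = riccatiStep A Q C R (z k) (detFilt A Q C R z T k) :=
  rfl

lemma exists_riccatiStep_eq_gainOp (hR : R.PosDef) (b : Bool) {X : Matrix (Fin n) (Fin n) ℝ}
    (hX : X.PosSemidef) : ∃ K, riccatiStep A Q C R b X = gainOp A Q C R K X := by
  cases b
  · exact ⟨0, riccatiStep_false X⟩
  · exact ⟨_, gOp_eq_gainOp hR hX⟩

lemma riccatiStep_mono (hR : R.PosDef) (b : Bool) {X Y : Matrix (Fin n) (Fin n) ℝ}
    (hX : X.PosSemidef) (h : X ≤ Y) : riccatiStep A Q C R b X ≤ riccatiStep A Q C R b Y := by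
  cases b
  · simpa only [riccatiStep_false] using gainOp_mono 0 h
  · exact gOp_mono hR hX h

lemma riccatiStep_smul_le (hQ : Q.PosSemidef) (hR : R.PosDef) (b : Bool)
    {X : Matrix (Fin n) (Fin n) ℝ} (hX : X.PosSemidef) {c : ℝ} (hc : 1 ≤ c) :
    riccatiStep A Q C R b (c • X) ≤ c • riccatiStep A Q C R b X := by
  cases b
  · simpa only [riccatiStep_false] using gainOp_smul_le hQ hR.posSemidef 0 X hc
  · exact gOp_smul_le hQ hR hX hc

lemma detFilt_posSemidef (hQ : Q.PosSemidef) (hR : R.PosDef) (hT : T.PosSemidef) (k : ℕ) :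
    (detFilt A Q C R z T k).PosSemidef := by
  induction k with
  | zero => exact hT
  | succ k ih =>
    obtain ⟨K, hK⟩ := exists_riccatiStep_eq_gainOp (Q := Q) (C := C) hR (z k) ih
    rw [detFilt_succ, hK]
    exact gainOp_posSemidef hQ hR.posSemidef K ih

lemma detFilt_le_smul_detFilt (hQ : Q.PosSemidef) (hR : R.PosDef) (hS : S.PosSemidef)
    (hT : T.PosSemidef) {c : ℝ} (hc : 1 ≤ c) {j : ℕ}
    (hj : detFilt A Q C R z S j ≤ c • detFilt A Q C R z T j) :
    ∀ k ≥ j, detFilt A Q C R z S k ≤ c • detFilt A Q C R z T k := by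
  intro k hk
  induction k, hk using Nat.le_induction with
  | base => exact hj
  | succ k _ ih =>
    rw [detFilt_succ, detFilt_succ]
    exact (riccatiStep_mono hR _ (detFilt_posSemidef hQ hR hS k) ih).trans
      (riccatiStep_smul_le hQ hR _ (detFilt_posSemidef hQ hR hT k) hc)

def ctrbGramian (A Q : Matrix (Fin n) (Fin n) ℝ) (k : ℕ) : Matrix (Fin n) (Fin n) ℝ :=
  ∑ i ∈ Finset.range k, A ^ i * Q * (A ^ i)ᵀ

lemma ctrbGramian_succ (k : ℕ) : ctrbGramian A Q (k + 1) = Q + A * ctrbGramian A Q k * Aᵀ := by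
  rw [ctrbGramian, ctrbGramian, Finset.sum_range_succ', Finset.mul_sum, Finset.sum_mul, add_comm]
  simp [pow_succ', Matrix.mul_assoc]

lemma ctrbMat_mul_transpose (B : Matrix (Fin n) (Fin n) ℝ) :
    ctrbMat A B * (ctrbMat A B)ᵀ = ctrbGramian A (B * Bᵀ) n := by
  ext i i'
  rw [ctrbGramian, Matrix.sum_apply,
    ← Fin.sum_univ_eq_sum_range (fun j => (A ^ j * (B * Bᵀ) * (A ^ j)ᵀ) i i'), mul_apply,
    Fintype.sum_prod_type]
  refine Finset.sum_congr rfl fun j _ => ?_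
  rw [show A ^ (j : ℕ) * (B * Bᵀ) * (A ^ (j : ℕ))ᵀ = A ^ (j : ℕ) * B * (A ^ (j : ℕ) * B)ᵀ by
    simp [transpose_mul, Matrix.mul_assoc], mul_apply]
  rfl

lemma ctrbGramian_posDef_of_rank_eq {B : Matrix (Fin n) (Fin n) ℝ}
    (h : (ctrbMat A B).rank = n) : (ctrbGramian A (B * Bᵀ) n).PosDef := by
  rw [← ctrbMat_mul_transpose]
  exact posDef_mul_transpose_of_rank_eq (by simpa using h)

/-- If `xᵀ Pₖ₊₁ x = 0` then `xᵀ Q x = 0` and, as `R > 0`, the gain satisfies `Kᵀ x = 0`; hence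
`(A - K C)ᵀ x = Aᵀ x`, and the induction continues backwards with `Aᵀ x`. -/
lemma dotProduct_ctrbGramian_eq_zero (hQ : Q.PosSemidef) (hR : R.PosDef) (hT : T.PosSemidef)
    (k : ℕ) (x : Fin n → ℝ) (hx : x ⬝ᵥ detFilt A Q C R z T k *ᵥ x = 0) :
    x ⬝ᵥ ctrbGramian A Q k *ᵥ x = 0 := by
  induction k generalizing x with
  | zero => simp [ctrbGramian]
  | succ k ih =>
    have hP := detFilt_posSemidef (A := A) (C := C) (z := z) hQ hR hT k
    obtain ⟨K, hK⟩ := exists_riccatiStep_eq_gainOp (Q := Q) (C := C) hR (z k) hP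
    rw [detFilt_succ, hK, gainOp] at hx
    simp only [add_mulVec, dotProduct_add, dotProduct_mul_mul_transpose_mulVec] at hx
    have hquad : ∀ {p : ℕ} {M : Matrix (Fin p) (Fin p) ℝ}, M.PosSemidef → ∀ y, 0 ≤ y ⬝ᵥ M *ᵥ y :=
      fun hM y => by simpa using hM.dotProduct_mulVec_nonneg y
    have hPx := hquad hP ((A - K * C)ᵀ *ᵥ x)
    have hQx := hquad hQ x
    have hRx := hquad hR.posSemidef (Kᵀ *ᵥ x)
    have hKx : Kᵀ *ᵥ x = 0 := by
      by_contra hne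
      have := hR.dotProduct_mulVec_pos hne
      rw [star_trivial] at this
      linarith
    have hFx : (A - K * C)ᵀ *ᵥ x = Aᵀ *ᵥ x := by
      rw [transpose_sub, sub_mulVec, transpose_mul, ← mulVec_mulVec, hKx, mulVec_zero, sub_zero]
    rw [hFx] at hPx hx
    rw [ctrbGramian_succ, add_mulVec, dotProduct_add, dotProduct_mul_mul_transpose_mulVec,
      ih _ (by linarith)]
    linarith

lemma detFilt_posDef (hQ : Q.PosSemidef) (hR : R.PosDef) (hT : T.PosSemidef) {k : ℕ}
    (hW : (ctrbGramian A Q k).PosDef) : (detFilt A Q C R z T k).PosDef := by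
  refine PosDef.of_dotProduct_mulVec_pos (detFilt_posSemidef hQ hR hT k).1 fun x hx => ?_
  have hP := (detFilt_posSemidef (A := A) (C := C) (z := z) hQ hR hT k).dotProduct_mulVec_nonneg x
  refine hP.lt_of_ne fun h0 => ?_
  have := hW.dotProduct_mulVec_pos hx
  rw [star_trivial] at h0 this
  exact this.ne' (dotProduct_ctrbGramian_eq_zero hQ hR hT k x h0.symm)

lemma exists_detFilt_le_smul_detFilt (hQ : Q.PosSemidef) (hW : (ctrbGramian A Q n).PosDef)
    (hR : R.PosDef) (hS : S.PosSemidef) (hT : T.PosSemidef) :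
    ∃ c ≥ (1 : ℝ), ∀ᶠ k in atTop, detFilt A Q C R z S k ≤ c • detFilt A Q C R z T k := by
  obtain ⟨c, hcn, hc⟩ := ((eventually_le_smul_of_posDef (detFilt_posSemidef hQ hR hS n).1
    (detFilt_posDef hQ hR hT hW)).and (eventually_ge_atTop 1)).exists
  exact ⟨c, hc, eventually_atTop.mpr ⟨n, detFilt_le_smul_detFilt hQ hR hS hT hc hcn⟩⟩

lemma limsup_trace_detFilt_lt_top (hQ : Q.PosSemidef) (hW : (ctrbGramian A Q n).PosDef)
    (hR : R.PosDef) (hS : S.PosSemidef) (hT : T.PosSemidef)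
    (h : atTop.limsup (fun k => ((detFilt A Q C R z T k).trace : EReal)) < ⊤) :
    atTop.limsup (fun k => ((detFilt A Q C R z S k).trace : EReal)) < ⊤ := by
  rw [EReal.limsup_coe_lt_top_iff] at h ⊢
  obtain ⟨b, hb⟩ := h
  obtain ⟨c, hc, hle⟩ := exists_detFilt_le_smul_detFilt (C := C) (z := z) hQ hW hR hS hT
  refine ⟨c * b, eventually_map.mpr ?_⟩
  filter_upwards [hle, eventually_map.mp hb] with k hk hbk
  calc (detFilt A Q C R z S k).trace ≤ (c • detFilt A Q C R z T k).trace :=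
        trace_le_trace_of_le hk
    _ = c * (detFilt A Q C R z T k).trace := by rw [trace_smul, smul_eq_mul]
    _ ≤ c * b := mul_le_mul_of_nonneg_left hbk (by linarith)

end Riccati

theorem limsup_trace_bounded_indep_init_general
    {n m : ℕ}
    (A : Matrix (Fin n) (Fin n) ℝ)
    (C : Matrix (Fin m) (Fin n) ℝ)
    (Q : Matrix (Fin n) (Fin n) ℝ) (hQ : Q.PosSemidef)
    (hCtrb : (ctrbMat A ((hQ.1.eigenvectorUnitary : Matrix (Fin n) (Fin n) ℝ) *
      diagonal ((RCLike.ofReal : ℝ → ℝ) ∘ Real.sqrt ∘ hQ.1.eigenvalues) *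
      star (hQ.1.eigenvectorUnitary : Matrix (Fin n) (Fin n) ℝ))).rank = n)
    (R : Matrix (Fin m) (Fin m) ℝ) (hR : R.PosDef)
    (z : ℕ → Bool)
    (S1 S2 : Matrix (Fin n) (Fin n) ℝ) (hS1 : S1.PosSemidef) (hS2 : S2.PosSemidef) :
    atTop.limsup (fun k => ((detFilt A Q C R z S1 k).trace : EReal)) < ⊤ ↔
      atTop.limsup (fun k => ((detFilt A Q C R z S2 k).trace : EReal)) < ⊤ := by
  rw [← hQ.cfcSqrt_eq] at hCtrb
  have hW : (ctrbGramian A Q n).PosDef := by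
    simpa only [hQ.cfcSqrt_mul_transpose_self] using ctrbGramian_posDef_of_rank_eq hCtrb
  exact ⟨limsup_trace_detFilt_lt_top hQ hW hR hS2 hS1, limsup_trace_detFilt_lt_top hQ hW hR hS1 hS2⟩

/-- Whether `limsup Tr(Pₖ) < ∞` for the deterministic Riccati recursion does not depend on
the (positive semidefinite) initial condition. -/
theorem limsup_trace_bounded_indep_init
    {n m : ℕ} (hn : 0 < n) (hm : 0 < m)
    (A : Matrix (Fin n) (Fin n) ℝ) (hA : IsUnit A.det)
    (C : Matrix (Fin m) (Fin n) ℝ) (hObs : (obsMat C A n).rank = n)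
    (Q : Matrix (Fin n) (Fin n) ℝ) (hQ : Q.PosSemidef)
    (hCtrb : (ctrbMat A ((hQ.1.eigenvectorUnitary : Matrix (Fin n) (Fin n) ℝ) *
      diagonal ((RCLike.ofReal : ℝ → ℝ) ∘ Real.sqrt ∘ hQ.1.eigenvalues) *
      star (hQ.1.eigenvectorUnitary : Matrix (Fin n) (Fin n) ℝ))).rank = n)
    (R : Matrix (Fin m) (Fin m) ℝ) (hR : R.PosDef)
    (z : ℕ → Bool)
    (S1 S2 : Matrix (Fin n) (Fin n) ℝ) (hS1 : S1.PosSemidef) (hS2 : S2.PosSemidef) :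
    atTop.limsup (fun k => ((detFilt A Q C R z S1 k).trace : EReal)) < ⊤ ↔
      atTop.limsup (fun k => ((detFilt A Q C R z S2 k).trace : EReal)) < ⊤ :=
  limsup_trace_bounded_indep_init_general A C Q hQ hCtrb R hR z S1 S2 hS1 hS2
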